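/- arXiv:2007.13425 — 2 statements merged into one kernel-verified Lean document; each statement's English description precedes it below -/
import Mathlib

section
/- Let f be a discrete Morse function on a digraph G, and let γ be an allowed elementary n-path in G. Then it cannot simultaneously hold that (i) there exists an allowed elementary (n−1)-path β < γ with f(β) = f(γ), and (ii) there exists an allowed elementary (n+1)-path α > γ with f(α) = f(γ). -/
/-- A digraph: a vertex set together with an irreflexive edge relation supported on the
vertex set (edges are ordered pairs off the diagonal). -/
structure DiGraph (V : Type) where
  verts : Set V
  Edge : V → V → Prop
  edge_mem_left : ∀ u v, Edge u v → u ∈ verts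
  edge_mem_right : ∀ u v, Edge u v → v ∈ verts
  edge_ne : ∀ u v, Edge u v → u ≠ v

variable {V : Type}

/-- An allowed elementary path: a nonempty list of vertices of `G` such that each
consecutive pair is a directed edge of `G`. -/
def IsAllowed (G : DiGraph V) (p : List V) : Prop :=
  p ≠ [] ∧ (∀ v ∈ p, v ∈ G.verts) ∧ p.Chain' G.Edge

/-- `Del p q` : `p` is obtained from `q` by deleting one vertex. -/
def Del (p q : List V) : Prop := ∃ i < q.length, p = q.eraseIdx i

/-- Value of a function on vertices extended to a path: the sum over its vertices. -/
def fval (f : V → ℝ) (p : List V) : ℝ := (p.map f).sum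

/-- A discrete Morse function on a digraph `G`: a nonnegative function on vertices such
that for every allowed elementary path `p` there is (i) at most one allowed elementary
path obtained from `p` by deleting one vertex with the same `f`-value, and (ii) at most
one allowed elementary path obtained from `p` by inserting one vertex with the same
`f`-value. -/
def IsMorse (G : DiGraph V) (f : V → ℝ) : Prop :=
  (∀ v, 0 ≤ f v) ∧
  ∀ p, IsAllowed G p →
    ((∀ β β', IsAllowed G β → Del β p → fval f β = fval f p →
        IsAllowed G β' → Del β' p → fval f β' = fval f p → β = β') ∧
     (∀ α α', IsAllowed G α → Del p α → fval f α = fval f p →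
        IsAllowed G α' → Del p α' → fval f α' = fval f p → α = α'))

/-- An allowed elementary path is critical if no allowed path obtained by deleting one
vertex has the same `f`-value, and no allowed path obtained by inserting one vertex has
the same `f`-value. -/
def IsCritical (G : DiGraph V) (f : V → ℝ) (p : List V) : Prop :=
  (¬ ∃ β, IsAllowed G β ∧ Del β p ∧ fval f β = fval f p) ∧
  (¬ ∃ α, IsAllowed G α ∧ Del p α ∧ fval f α = fval f p)

/-- A directed loop: an allowed elementary path `v₀ v₁ ⋯ vₙ v₀` with `n ≥ 1`. -/
def IsLoop (G : DiGraph V) (p : List V) : Prop :=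
  IsAllowed G p ∧ 3 ≤ p.length ∧ p.head? = p.getLast?

/-- A simplicial allowed elementary path: all vertices distinct. -/
def Simplicial (G : DiGraph V) (p : List V) : Prop := IsAllowed G p ∧ p.Nodup

/-- A pair of the combinatorial discrete gradient vector field `M(G,f)`:
`β` is obtained from `α` by inserting one vertex, and `f(α) = f(β)`. -/
def MPair (G : DiGraph V) (f : V → ℝ) (α β : List V) : Prop :=
  IsAllowed G α ∧ IsAllowed G β ∧ Del α β ∧ fval f α = fval f β

/-- `H` is a sub-digraph of `G`. -/
def Subdigraph (H G : DiGraph V) : Prop :=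
  H.verts ⊆ G.verts ∧ ∀ u v, H.Edge u v → G.Edge u v

/-!
Write `α = γ + w` and `γ = β + v` with `f w = f v = 0`, and view both `w` and `v` inside `α`,
say `α = l a m c r` where `{a, c} = {w, v}`. If `m` is nonempty, the two paths `α - a` and `α - c`
are allowed (each is glued from a prefix of `α` and a suffix of `β`, or vice versa, overlapping
along `m`), so the Morse condition at `α` forces them to coincide, which puts the same vertex on
both ends of an edge. If `m` is empty, `a c` is an edge of `α`, and the same argument is run at
the prefix `l a c` or the suffix `a c r` of `α`, whose deletions are prefixes or suffixes of `α`
and `γ`.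
-/

section

variable {G : DiGraph V} {f : V → ℝ}

@[simp]
lemma fval_cons (f : V → ℝ) (x : V) (r : List V) : fval f (x :: r) = f x + fval f r := by
  simp [fval]

@[simp]
lemma fval_append (f : V → ℝ) (l r : List V) : fval f (l ++ r) = fval f l + fval f r := by
  simp [fval]

lemma del_iff_exists_append {p q : List V} : Del p q ↔ ∃ l x r, q = l ++ x :: r ∧ p = l ++ r := by
  constructor
  · rintro ⟨i, hi, rfl⟩
    refine ⟨q.take i, q[i], q.drop (i + 1), ?_, List.eraseIdx_eq_take_drop_succ q i⟩
    rw [← List.drop_eq_getElem_cons hi, List.take_append_drop]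
  · rintro ⟨l, x, r, rfl, rfl⟩
    exact ⟨l.length, by simp, by simp [List.eraseIdx_append_of_length_le]⟩

lemma List.append_eq_append_cons {L R L' R' : List V} {v : V} (h : L ++ R = L' ++ v :: R') :
    (∃ M, L' = L ++ M ∧ R = M ++ v :: R') ∨ (∃ N, L = L' ++ v :: N ∧ R' = N ++ R) := by
  rcases List.append_eq_append_iff.mp h with ⟨M, rfl, hR⟩ | ⟨_ | ⟨x, N⟩, rfl, hR'⟩
  · exact .inl ⟨M, rfl, hR⟩
  · exact .inl ⟨[], by simp, by simpa using hR'.symm⟩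
  · obtain ⟨rfl, rfl⟩ := List.cons_eq_cons.mp hR'
    exact .inr ⟨N, rfl, rfl⟩

namespace IsAllowed

lemma of_infix {p q : List V} (hq : IsAllowed G q) (h : p <:+: q) (hp : p ≠ []) :
    IsAllowed G p :=
  ⟨hp, fun v hv => hq.2.1 v (h.subset hv), List.IsChain.infix hq.2.2 h⟩

lemma append_overlap {l₁ l₂ l₃ : List V} (h₁ : IsAllowed G (l₁ ++ l₂))
    (h₂ : IsAllowed G (l₂ ++ l₃)) (hn : l₂ ≠ []) : IsAllowed G (l₁ ++ l₂ ++ l₃) := by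
  refine ⟨by simp [hn], fun v hv => ?_, List.IsChain.append_overlap h₁.2.2 h₂.2.2 hn⟩
  rcases List.mem_append.mp hv with hv | hv
  · exact h₁.2.1 v hv
  · exact h₂.2.1 v (List.mem_append_right _ hv)

lemma ne_of_append_cons_cons {l r : List V} {a c : V} (h : IsAllowed G (l ++ a :: c :: r)) :
    a ≠ c :=
  G.edge_ne a c <| List.isChain_pair.mp <| List.IsChain.infix h.2.2 ⟨l, r, by simp⟩

end IsAllowed

namespace IsMorse

lemma eq_of_erase_zero (hf : IsMorse G f) {l₁ r₁ l₂ r₂ : List V} {x₁ x₂ : V}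
    (hq : IsAllowed G (l₁ ++ x₁ :: r₁)) (h : l₁ ++ x₁ :: r₁ = l₂ ++ x₂ :: r₂)
    (h₁ : IsAllowed G (l₁ ++ r₁)) (h₂ : IsAllowed G (l₂ ++ r₂)) (hx₁ : f x₁ = 0)
    (hx₂ : f x₂ = 0) : l₁ ++ r₁ = l₂ ++ r₂ :=
  (hf.2 _ hq).1 _ _ h₁ (del_iff_exists_append.mpr ⟨_, _, _, rfl, rfl⟩) (by simp [hx₁])
    h₂ (del_iff_exists_append.mpr ⟨_, _, _, h, rfl⟩) (by rw [h]; simp [hx₂])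

lemma false_of_adjacent_zeros (hf : IsMorse G f) {l r : List V} {a c : V}
    (hq : IsAllowed G (l ++ a :: c :: r)) (ha : IsAllowed G (l ++ a :: r))
    (hc : IsAllowed G (l ++ c :: r)) (ha0 : f a = 0) (hc0 : f c = 0) : False := by
  have h := hf.eq_of_erase_zero hq (l₂ := l ++ [a]) (r₂ := r) (by simp) hc (by simpa using ha)
    ha0 hc0
  simp only [List.append_assoc, List.singleton_append, List.append_cancel_left_eq,
    List.cons.injEq, and_true] at h
  exact hq.ne_of_append_cons_cons h.symm

lemma false_of_separated_zeros (hf : IsMorse G f) {l m r : List V} {a c : V}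
    (hα : IsAllowed G (l ++ a :: (m ++ c :: r))) (hβ : IsAllowed G (l ++ (m ++ r)))
    (hm : m ≠ []) (ha0 : f a = 0) (hc0 : f c = 0) : False := by
  obtain ⟨b, m, rfl⟩ := List.exists_cons_of_ne_nil hm
  have hα_a : IsAllowed G (l ++ (b :: m) ++ (c :: r)) :=
    (hβ.of_infix ⟨[], r, by simp⟩ (by simp)).append_overlap
      (hα.of_infix ⟨l ++ [a], [], by simp⟩ (by simp)) (by simp)
  have hα_c : IsAllowed G (l ++ [a] ++ (b :: m) ++ r) :=
    (hα.of_infix ⟨[], c :: r, by simp⟩ (by simp)).append_overlap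
      (hβ.of_infix ⟨l, [], by simp⟩ (by simp)) (by simp)
  have h := hf.eq_of_erase_zero hα (l₂ := l ++ a :: b :: m) (r₂ := r) (by simp)
    (by simpa using hα_a) (by simpa using hα_c) ha0 hc0
  simp only [List.cons_append, List.append_assoc, List.append_cancel_left_eq, List.cons.injEq] at h
  have hα' : IsAllowed G (l ++ a :: b :: (m ++ c :: r)) := by simpa using hα
  exact hα'.ne_of_append_cons_cons h.1.symm

lemma false_of_two_zeros (hf : IsMorse G f) {l m r : List V} {a c : V}
    (hα : IsAllowed G (l ++ a :: (m ++ c :: r))) (hβ : IsAllowed G (l ++ (m ++ r)))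
    (hγ : IsAllowed G (l ++ (m ++ c :: r)) ∨ IsAllowed G (l ++ a :: (m ++ r)))
    (ha0 : f a = 0) (hc0 : f c = 0) : False := by
  rcases eq_or_ne m [] with rfl | hm
  · simp only [List.nil_append] at hα hγ
    rcases hγ with hγ | hγ
    · exact hf.false_of_adjacent_zeros (l := l) (r := [])
        (hα.of_infix ⟨[], r, by simp⟩ (by simp)) (hα.of_infix ⟨[], c :: r, by simp⟩ (by simp))
        (hγ.of_infix ⟨[], r, by simp⟩ (by simp)) ha0 hc0
    · exact hf.false_of_adjacent_zeros (l := []) (r := r)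
        (hα.of_infix ⟨l, [], by simp⟩ (by simp)) (hγ.of_infix ⟨l, [], by simp⟩ (by simp))
        (hα.of_infix ⟨l ++ [a], [], by simp⟩ (by simp)) ha0 hc0
  · exact hf.false_of_separated_zeros hα hβ hm ha0 hc0

end IsMorse

end

/-- Let `f` be a discrete Morse function on a digraph `G` and `γ` an
allowed elementary path. Then it cannot simultaneously hold that some allowed path
obtained from `γ` by deleting one vertex has the same `f`-value and some allowed path
obtained from `γ` by inserting one vertex has the same `f`-value. -/
theorem not_both_collapsible (G : DiGraph V) (f : V → ℝ) (hf : IsMorse G f)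
    (γ : List V) (hγ : IsAllowed G γ) :
    ¬ ((∃ β, IsAllowed G β ∧ Del β γ ∧ fval f β = fval f γ) ∧
       (∃ α, IsAllowed G α ∧ Del γ α ∧ fval f α = fval f γ)) := by
  rintro ⟨⟨β, hβ, hβγ, hfβ⟩, ⟨α, hα, hγα, hfα⟩⟩
  obtain ⟨L, w, R, rfl, rfl⟩ := del_iff_exists_append.mp hγα
  obtain ⟨L', v, R', hγ_eq, rfl⟩ := del_iff_exists_append.mp hβγ
  have hw : f w = 0 := by simpa using hfα
  have hv : f v = 0 := by rw [hγ_eq] at hfβ; simpa using hfβ.symm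
  rcases List.append_eq_append_cons hγ_eq with ⟨M, rfl, rfl⟩ | ⟨N, rfl, rfl⟩
  · exact hf.false_of_two_zeros hα (by simpa using hβ) (.inl hγ) hw hv
  · exact hf.false_of_two_zeros (by simpa using hα) hβ (.inr (by simpa using hγ)) hv hw
end

section
/- Let G be a digraph in which every vertex lies on a directed loop in the sense of condition (A) (for each allowed elementary path, every vertex of each simplicial piece in its canonical loop decomposition belongs to some directed loop). Then every discrete Morse function on G is strictly positive on all vertices, hence trivial (its combinatorial gradient vector field is empty). -/
variable {V : Type}

/-- Glue (concatenate) a path with a list of further paths, identifying the last vertex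
of each piece with the first vertex of the next. -/
def glueAll : List V → List (List V) → List V
  | p, [] => p
  | p, q :: rest => glueAll (p ++ q.tail) rest

/-- `L = [β₁, γ₁, β₂, γ₂, …, β_k]` is a decomposition of the allowed elementary path `α`
as a concatenation `β₁*γ₁*β₂*⋯*β_k` of simplicial allowed elementary paths `βᵢ`
(possibly single vertices) and directed loops `γᵢ`. -/
def IsDecomp (G : DiGraph V) (α : List V) (L : List (List V)) : Prop :=
  L ≠ [] ∧ L.length % 2 = 1 ∧
  (∀ i : Fin L.length, if i.val % 2 = 0 then Simplicial G (L.get i) else IsLoop G (L.get i)) ∧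
  (∀ i : Fin L.length, ∀ h : i.val + 1 < L.length,
    (L.get i).getLast? = (L.get ⟨i.val + 1, h⟩).head?) ∧
  glueAll L.headI L.tail = α

/-- A decomposition produced by the greedy algorithm that cuts at the first repeated
vertex: each simplicial piece, extended by the interior of the following loop, is still
duplicate-free. -/
def GreedyDecomp (G : DiGraph V) (α : List V) (L : List (List V)) : Prop :=
  IsDecomp G α L ∧
  ∀ i : Fin L.length, i.val % 2 = 0 →
    (if h : i.val + 1 < L.length
      then ((L.get i) ++ (L.get ⟨i.val + 1, h⟩).tail.dropLast).Nodup
      else (L.get i).Nodup)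

/-! If a Morse function `f` vanished at a vertex `v`, condition (A) applied to the one-vertex
path `v` would put `v` on a directed loop, which can be rotated to start and end at `v`.
Deleting the first or the last vertex of that loop then gives two different allowed paths
with the same `f`-value as the loop, against the Morse condition. Hence `f > 0`, and
inserting a vertex into a path strictly increases its `f`-value, so `M(G,f)` is empty. -/

lemma fval_eraseIdx_add {f : V → ℝ} {l : List V} {i : ℕ} (hi : i < l.length) :
    fval f (l.eraseIdx i) + f l[i] = fval f l := by
  have := List.CommMonoid.add_sum_eraseIdx (l := l.map f) (i := i) (by simpa using hi)
  rw [List.eraseIdx_map, List.getElem_map] at this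
  rw [fval, fval, ← this, add_comm]

lemma isAllowed_singleton {G : DiGraph V} {v : V} (hv : v ∈ G.verts) : IsAllowed G [v] :=
  ⟨List.cons_ne_nil v [], by simpa using hv, List.isChain_singleton v⟩

lemma IsAllowed.left_of_append {G : DiGraph V} {l₁ l₂ : List V} (h : IsAllowed G (l₁ ++ l₂))
    (h₁ : l₁ ≠ []) : IsAllowed G l₁ :=
  ⟨h₁, fun x hx => h.2.1 x (List.mem_append_left l₂ hx), h.2.2.left_of_append⟩

lemma IsAllowed.right_of_append {G : DiGraph V} {l₁ l₂ : List V} (h : IsAllowed G (l₁ ++ l₂))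
    (h₂ : l₂ ≠ []) : IsAllowed G l₂ :=
  ⟨h₂, fun x hx => h.2.1 x (List.mem_append_right l₁ hx), h.2.2.right_of_append⟩

lemma greedyDecomp_singleton {G : DiGraph V} {v : V} (hv : v ∈ G.verts) :
    GreedyDecomp G [v] [[v]] := by
  refine ⟨⟨List.cons_ne_nil _ _, rfl, fun i => ?_, fun i hi => absurd hi (by simp), rfl⟩,
    fun i _ => ?_⟩
  all_goals obtain rfl : i = ⟨0, Nat.zero_lt_one⟩ := Fin.ext (Nat.lt_one_iff.mp i.isLt)
  · exact ⟨isAllowed_singleton hv, List.nodup_singleton v⟩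
  · exact List.nodup_singleton v

lemma IsLoop.exists_eq_cons_append {G : DiGraph V} {p : List V} (hp : IsLoop G p) :
    ∃ a t, t ≠ [] ∧ p = a :: (t ++ [a]) := by
  obtain ⟨⟨hne, -, -⟩, hlen, hhl⟩ := hp
  obtain ⟨a, s, rfl⟩ := List.exists_cons_of_ne_nil hne
  rcases List.eq_nil_or_concat s with rfl | ⟨t, b, rfl⟩
  · simp at hlen
  obtain rfl : b = a := by simpa [List.getLast?_cons] using hhl.symm
  refine ⟨b, t, ?_, by simp⟩
  rintro rfl
  simp at hlen

theorem List.IsChain.rotate_closed {α : Type*} {R : α → α → Prop} {a v : α} {l₁ l₂ : List α}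
    (h : IsChain R (a :: (l₁ ++ v :: (l₂ ++ [a])))) :
    IsChain R (v :: (l₂ ++ a :: (l₁ ++ [v]))) := by
  obtain ⟨h₁, h₂⟩ := isChain_cons_split.mp h
  rw [← cons_append, isChain_split]
  exact ⟨h₂, h₁⟩

lemma IsLoop.exists_head_eq {G : DiGraph V} {c : List V} (hc : IsLoop G c) {v : V}
    (hv : v ∈ c) : ∃ p, IsLoop G p ∧ p.head? = some v := by
  obtain ⟨a, t, -, rfl⟩ := hc.exists_eq_cons_append
  by_cases hva : v = a
  · exact ⟨_, hc, by simp [hva]⟩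
  have hvt : v ∈ t := by simpa [hva] using hv
  obtain ⟨l₁, l₂, rfl⟩ := List.append_of_mem hvt
  obtain ⟨⟨-, hverts, hchain⟩, hlen, -⟩ := hc
  rw [List.append_assoc, List.cons_append] at hchain
  refine ⟨v :: (l₂ ++ a :: (l₁ ++ [v])), ⟨⟨List.cons_ne_nil _ _, ?_, ?_⟩, ?_, ?_⟩, rfl⟩
  · intro x hx
    apply hverts
    simp only [List.mem_cons, List.mem_append] at hx ⊢
    tauto
  · exact hchain.rotate_closed
  · simp only [List.length_cons, List.length_append, List.length_nil] at hlen ⊢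
    omega
  · simp [List.getLast?_cons]

lemma IsMorse.pos_of_isLoop {G : DiGraph V} {f : V → ℝ} (hf : IsMorse G f) {p : List V}
    (hp : IsLoop G p) {v : V} (hv : p.head? = some v) : 0 < f v := by
  refine (hf.1 v).lt_of_ne fun hfv => ?_
  obtain ⟨a, t, ht, rfl⟩ := hp.exists_eq_cons_append
  obtain rfl : a = v := by simpa using hv
  obtain ⟨w, r, rfl⟩ := List.exists_cons_of_ne_nil ht
  have hall := hp.1
  have hfirst : IsAllowed G (w :: (r ++ [a])) := hall.right_of_append (l₁ := [a]) (by simp)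
  have hlast : IsAllowed G (a :: w :: r) :=
    (hall : IsAllowed G ((a :: w :: r) ++ [a])).left_of_append (List.cons_ne_nil _ _)
  have hdel_first : Del (w :: (r ++ [a])) (a :: w :: (r ++ [a])) := ⟨0, by simp, rfl⟩
  have hdel_last : Del (a :: w :: r) (a :: w :: (r ++ [a])) :=
    ⟨r.length + 2, by simp, by simp [List.eraseIdx_append_of_length_le]⟩
  have hval_first : fval f (w :: (r ++ [a])) = fval f (a :: w :: (r ++ [a])) := by
    simp [fval, hfv]
  have hval_last : fval f (a :: w :: r) = fval f (a :: w :: (r ++ [a])) := by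
    simp [fval, hfv]
  have heq := (hf.2 _ hall).1 _ _ hfirst hdel_first hval_first hlast hdel_last hval_last
  exact G.edge_ne a w (List.isChain_cons_cons.mp hall.2.2).1 (List.cons.inj heq).1.symm

lemma IsMorse.pos_of_mem_isLoop {G : DiGraph V} {f : V → ℝ} (hf : IsMorse G f) {c : List V}
    (hc : IsLoop G c) {v : V} (hv : v ∈ c) : 0 < f v := by
  obtain ⟨p, hp, hpv⟩ := hc.exists_head_eq hv
  exact hf.pos_of_isLoop hp hpv

lemma not_mPair_of_forall_pos {G : DiGraph V} {f : V → ℝ} (hpos : ∀ v ∈ G.verts, 0 < f v)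
    (α β : List V) : ¬ MPair G f α β := by
  rintro ⟨-, hβ, ⟨i, hi, rfl⟩, hval⟩
  have := fval_eraseIdx_add (f := f) hi
  have := hpos _ (hβ.2.1 _ (List.getElem_mem hi))
  linarith

/-- Let `G` be a digraph satisfying condition (A): for each allowed
elementary path, every vertex of each simplicial piece of its canonical (greedy) loop
decomposition lies on some directed loop. Then every discrete Morse function on `G` is
strictly positive on all vertices, and hence its combinatorial discrete gradient vector
field is empty. -/
theorem morse_trivial_of_condA (G : DiGraph V)
    (hA : ∀ α L, IsAllowed G α → GreedyDecomp G α L →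
      ∀ i : Fin L.length, i.val % 2 = 0 → ∀ v ∈ L.get i, ∃ c, IsLoop G c ∧ v ∈ c) :
    ∀ f : V → ℝ, IsMorse G f →
      (∀ v ∈ G.verts, 0 < f v) ∧ ∀ α β, ¬ MPair G f α β := by
  intro f hf
  have hpos : ∀ v ∈ G.verts, 0 < f v := fun v hv => by
    obtain ⟨c, hc, hvc⟩ := hA [v] [[v]] (isAllowed_singleton hv) (greedyDecomp_singleton hv)
      ⟨0, Nat.zero_lt_one⟩ rfl v (List.mem_singleton_self v)
    exact hf.pos_of_mem_isLoop hc hvc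
  exact ⟨hpos, not_mPair_of_forall_pos hpos⟩
end
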